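/- Let L be a Moufang loop of class at most 2 such that [x,y,z]³ = 1 for all x, y, z ∈ L. Fix κ ∈ L and define the κ-isotope operation c∘d = (cκ)(κ⁻¹d) on L. Then (L,∘) is a loop with identity 1 in which inverses agree with those of L, and for all c, d, e ∈ L and all integers n ≥ 0: the n-th ∘-power of c (defined by c^∘⁰ = 1, c^∘⁽ⁿ⁺¹⁾ = c∘c^∘ⁿ) equals cⁿ; the ∘-commutator (d∘c)⁻¹(c∘d) equals [c,d]·[c,κ,d]⁻¹; and the ∘-associator (c∘(d∘e))⁻¹((c∘d)∘e) equals [c,d,e]. -/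
import Mathlib


/-- An inverse property loop: a set with multiplication, identity, and two-sided
inverses satisfying `a⁻¹(ax) = x = (xa)a⁻¹`. -/
class IPLoop (L : Type*) extends Mul L, One L, Inv L where
  one_mul : ∀ a : L, 1 * a = a
  mul_one : ∀ a : L, a * 1 = a
  inv_mul_cancel_left : ∀ a x : L, a⁻¹ * (a * x) = x
  mul_inv_cancel_right : ∀ a x : L, (x * a) * a⁻¹ = x

namespace IPLoop

variable {L : Type*} [IPLoop L]

/-- Powers with natural number exponent, `c^(n+1) = c * c^n`. -/
def npow (c : L) : ℕ → L
  | 0 => 1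
  | n + 1 => c * npow c n

instance : Pow L ℕ := ⟨npow⟩

/-- Powers with integer exponent. -/
def zpow (c : L) : ℤ → L
  | Int.ofNat n => c ^ n
  | Int.negSucc n => (c ^ (n + 1))⁻¹

instance : Pow L ℤ := ⟨zpow⟩

/-- The commutator `[c,d] = (dc)⁻¹(cd)`. -/
def comm (c d : L) : L := (d * c)⁻¹ * (c * d)

/-- The associator `[c,d,e] = (c(de))⁻¹((cd)e)`. -/
def assoc (c d e : L) : L := (c * (d * e))⁻¹ * ((c * d) * e)

/-- Membership in the center `Z(L)`. -/
def inCenter (z : L) : Prop :=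
  (∀ x : L, comm z x = 1) ∧
  ∀ x y : L, assoc z x y = 1 ∧ assoc x z y = 1 ∧ assoc x y z = 1

/-- The Moufang identity `((dc)e)c = d(c(ec))`. -/
def IsMoufang (L : Type*) [IPLoop L] : Prop :=
  ∀ c d e : L, ((d * c) * e) * c = d * (c * (e * c))

/-- A loop is of (central nilpotence) class at most 2 if every commutator and
every associator lies in the center. -/
def ClassTwo (L : Type*) [IPLoop L] : Prop :=
  (∀ c d : L, inCenter (comm c d)) ∧ ∀ c d e : L, inCenter (assoc c d e)

/-- The order of an element: least `n > 0` with `c^n = 1` (or `0` if none). -/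
noncomputable def ordOf (c : L) : ℕ := sInf {n : ℕ | 0 < n ∧ c ^ n = 1}

/-- The subloop generated by a subset `S`. -/
def subloopClosure (S : Set L) : Set L :=
  ⋂₀ {T : Set L | (1 : L) ∈ T ∧ (∀ x ∈ T, x⁻¹ ∈ T) ∧
      (∀ x ∈ T, ∀ y ∈ T, x * y ∈ T) ∧ S ⊆ T}

end IPLoop

namespace IPLoop

variable {L : Type*} [IPLoop L]

@[simp] lemma one_mul' (a : L) : 1 * a = a := IPLoop.one_mul a
@[simp] lemma mul_one' (a : L) : a * 1 = a := IPLoop.mul_one a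
@[simp] lemma linv (a x : L) : a⁻¹ * (a * x) = x := IPLoop.inv_mul_cancel_left a x
@[simp] lemma rinv (a x : L) : (x * a) * a⁻¹ = x := IPLoop.mul_inv_cancel_right a x

@[simp] lemma mul_right_inv (a : L) : a * a⁻¹ = 1 := by
  have := rinv a (1 : L); simpa using this
@[simp] lemma mul_left_inv (a : L) : a⁻¹ * a = 1 := by
  have := linv a (1 : L); simpa using this
@[simp] lemma inv_inv' (a : L) : a⁻¹⁻¹ = a := by
  have h := linv a⁻¹ a
  simp only [mul_left_inv, mul_one'] at h
  exact h
@[simp] lemma one_inv : (1 : L)⁻¹ = 1 := by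
  have h := linv (1 : L) 1
  simp only [one_mul', mul_one'] at h
  exact h
@[simp] lemma linv' (a x : L) : a * (a⁻¹ * x) = x := by
  have := linv a⁻¹ x; rwa [inv_inv'] at this
@[simp] lemma rinv' (a x : L) : (x * a⁻¹) * a = x := by
  have := rinv a⁻¹ x; rwa [inv_inv'] at this

lemma left_cancel {a x y : L} (h : a * x = a * y) : x = y := by
  have := congrArg (fun t => a⁻¹ * t) h; simpa using this
lemma right_cancel {a x y : L} (h : x * a = y * a) : x = y := by
  have := congrArg (fun t => t * a⁻¹) h; simpa using this

lemma eq_inv_of_mul_eq_one {a b : L} (h : a * b = 1) : b = a⁻¹ := by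
  have := congrArg (fun t => a⁻¹ * t) h; simpa using this
lemma inv_eq_of_mul_eq_one {a b : L} (h : a * b = 1) : a = b⁻¹ := by
  have := congrArg (fun t => t * b⁻¹) h; simpa using this

lemma mul_inv_rev (a b : L) : (a * b)⁻¹ = b⁻¹ * a⁻¹ := by
  have h1 : (a * b)⁻¹ * a = b⁻¹ := by
    have := linv (a * b) b⁻¹
    calc (a*b)⁻¹ * a = (a*b)⁻¹ * ((a*b) * b⁻¹) := by rw [rinv]
    _ = b⁻¹ := linv _ _
  have h2 := congrArg (fun t => t * a⁻¹) h1
  simp only [rinv] at h2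
  exact h2

end IPLoop

namespace IPLoop

variable {L : Type*} [IPLoop L]

/-! ### Center calculus -/

lemma comm_eq (c d : L) : c * d = (d * c) * comm c d := by
  unfold comm; rw [linv']

lemma assoc_eq (x y z : L) : (x * y) * z = (x * (y * z)) * assoc x y z := by
  unfold assoc; rw [linv']

lemma comm_eq_one_iff {c d : L} : comm c d = 1 ↔ c * d = d * c := by
  constructor
  · intro h
    have h2 := comm_eq c d; rw [h, mul_one'] at h2; exact h2
  · intro h
    unfold comm; rw [← h, mul_left_inv]

lemma assoc_eq_one_iff {x y z : L} : assoc x y z = 1 ↔ (x * y) * z = x * (y * z) := by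
  constructor
  · intro h
    have h2 := assoc_eq x y z; rw [h, mul_one'] at h2; exact h2
  · intro h
    unfold assoc; rw [h, mul_left_inv]

variable {z w : L}

lemma cen_comm (hz : inCenter z) (x : L) : z * x = x * z :=
  comm_eq_one_iff.mp (hz.1 x)

lemma cen_a1 (hz : inCenter z) (x y : L) : (z * x) * y = z * (x * y) :=
  assoc_eq_one_iff.mp (hz.2 x y).1

lemma cen_a2 (hz : inCenter z) (x y : L) : (x * z) * y = x * (z * y) :=
  assoc_eq_one_iff.mp (hz.2 x y).2.1

lemma cen_a3 (hz : inCenter z) (x y : L) : (x * y) * z = x * (y * z) :=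
  assoc_eq_one_iff.mp (hz.2 x y).2.2

/-- move a central factor from the inside to the outside-right -/
lemma cen_swap (hz : inCenter z) (x y : L) : (x * z) * y = (x * y) * z := by
  rw [cen_a2 hz, cen_comm hz y, ← cen_a3 hz]

lemma cen_left_swap (hz : inCenter z) (x y : L) : z * (x * y) = x * (z * y) := by
  rw [← cen_a1 hz, cen_comm hz x, cen_a2 hz]

lemma cen_out (hz : inCenter z) (x y : L) : x * (z * y) = (x * y) * z := by
  rw [← cen_a2 hz, cen_swap hz]

lemma cen_one : inCenter (1 : L) := by
  refine ⟨fun x => ?_, fun x y => ⟨?_, ?_, ?_⟩⟩ <;> simp [comm, assoc]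

lemma cen_inv (hz : inCenter z) : inCenter z⁻¹ := by
  have hc : ∀ x : L, z⁻¹ * x = x * z⁻¹ := by
    intro x
    have h1 : (z * x⁻¹)⁻¹ = (x⁻¹ * z)⁻¹ := by rw [cen_comm hz]
    rw [mul_inv_rev, mul_inv_rev, inv_inv'] at h1
    exact h1.symm
  have ha2 : ∀ x y : L, (x * z⁻¹) * y = x * (z⁻¹ * y) := by
    intro x y
    apply left_cancel (a := z)
    have e1 : z * ((x * z⁻¹) * y) = x * y := by
      rw [← cen_a1 hz, cen_comm hz (x * z⁻¹), rinv']
    have e2 : z * (x * (z⁻¹ * y)) = x * y := by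
      rw [← cen_a1 hz, cen_comm hz x, cen_a2 hz, linv']
    rw [e1, e2]
  have ha1 : ∀ x y : L, (z⁻¹ * x) * y = z⁻¹ * (x * y) := by
    intro x y
    apply left_cancel (a := z)
    have e1 : z * ((z⁻¹ * x) * y) = x * y := by rw [← cen_a1 hz, linv']
    have e2 : z * (z⁻¹ * (x * y)) = x * y := linv' _ _
    rw [e1, e2]
  have ha3 : ∀ x y : L, (x * y) * z⁻¹ = x * (y * z⁻¹) := by
    intro x y
    rw [← hc (x*y), ← ha1, hc x, ha2, hc y]
  exact ⟨fun x => comm_eq_one_iff.mpr (hc x),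
    fun x y => ⟨assoc_eq_one_iff.mpr (ha1 x y), assoc_eq_one_iff.mpr (ha2 x y),
      assoc_eq_one_iff.mpr (ha3 x y)⟩⟩

lemma cen_mul (hz : inCenter z) (hw : inCenter w) : inCenter (z * w) := by
  have hc : ∀ x : L, (z * w) * x = x * (z * w) := by
    intro x
    rw [cen_a1 hz, cen_comm hw x, ← cen_a1 hz, cen_comm hz x, cen_a2 hz]
  have ha1 : ∀ x y : L, ((z * w) * x) * y = (z * w) * (x * y) := by
    intro x y
    rw [cen_a1 hz, cen_a1 hz, cen_a1 hw, ← cen_a1 hz]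
  have ha2 : ∀ x y : L, (x * (z * w)) * y = x * ((z * w) * y) := by
    intro x y
    calc (x * (z * w)) * y = ((x * z) * w) * y := by rw [cen_a2 hz]
    _ = (x * z) * (w * y) := cen_a2 hw _ _
    _ = x * (z * (w * y)) := cen_a2 hz _ _
    _ = x * ((z * w) * y) := by rw [cen_a1 hz]
  have ha3 : ∀ x y : L, (x * y) * (z * w) = x * (y * (z * w)) := by
    intro x y
    calc (x * y) * (z * w) = ((x * y) * z) * w := (cen_a3 hw _ _).symm
    _ = (x * (y * z)) * w := by rw [cen_a3 hz]
    _ = x * ((y * z) * w) := cen_a3 hw _ _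
    _ = x * (y * (z * w)) := by rw [cen_a3 hw y z]
  exact ⟨fun x => comm_eq_one_iff.mpr ((hc x)), fun x y =>
    ⟨assoc_eq_one_iff.mpr (ha1 x y), assoc_eq_one_iff.mpr (ha2 x y),
     assoc_eq_one_iff.mpr (ha3 x y)⟩⟩

end IPLoop

namespace IPLoop

variable {L : Type*} [IPLoop L]

lemma hA (h2 : ClassTwo L) (x y z : L) : inCenter (assoc x y z) := h2.2 x y z
lemma hC (h2 : ClassTwo L) (x y : L) : inCenter (comm x y) := h2.1 x y

@[simp] lemma A_one1 (y z : L) : assoc 1 y z = 1 := by simp [assoc]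
@[simp] lemma A_one2 (x z : L) : assoc x 1 z = 1 := by simp [assoc]
@[simp] lemma A_one3 (x y : L) : assoc x y 1 = 1 := by simp [assoc]

section Mouf
variable (h2 : ClassTwo L) (hM : IsMoufang L)
include h2 hM
set_option linter.unusedSectionVars false

/-- Moufang in associator form -/
lemma M1mul (c d e : L) : assoc d c (e*c) * assoc (d*c) e c = 1 := by
  have hm := hM c d e
  have e1 : ((d*c)*e)*c = ((d*c)*(e*c)) * assoc (d*c) e c := assoc_eq _ _ _
  rw [assoc_eq d c (e*c), cen_a2 (hA h2 d c (e*c)), hm] at e1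
  nth_rewrite 1 [← mul_one' (d * (c * (e * c)))] at e1
  exact (left_cancel e1).symm

lemma M1 (c d e : L) : assoc d c (e*c) = (assoc (d*c) e c)⁻¹ :=
  inv_eq_of_mul_eq_one (M1mul h2 hM c d e)

lemma flex (c u : L) : assoc c u c = 1 := by
  have h := M1mul h2 hM c 1 u
  rw [A_one1, one_mul', one_mul'] at h
  exact h

lemma E1 (d c : L) : assoc d c c = 1 := by
  have h := M1mul h2 hM c d 1
  rw [A_one2, mul_one', one_mul'] at h
  exact h

lemma INVA (x y z : L) : assoc x y z = assoc z⁻¹ y⁻¹ x⁻¹ := by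
  have e1 : z⁻¹*(y⁻¹*x⁻¹) = ((x*y)*z)⁻¹ := by
    rw [mul_inv_rev (x*y) z, mul_inv_rev x y]
  have e2 : (z⁻¹*y⁻¹)*x⁻¹ = (x*(y*z))⁻¹ := by
    rw [mul_inv_rev x (y*z), mul_inv_rev y z]
  show assoc x y z = (z⁻¹*(y⁻¹*x⁻¹))⁻¹ * ((z⁻¹*y⁻¹)*x⁻¹)
  rw [e1, e2, inv_inv']
  have e3 : (x*y)*z = (x*(y*z)) * assoc x y z := assoc_eq _ _ _
  rw [e3, cen_swap (hA h2 x y z), mul_right_inv, one_mul']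

lemma E5 (x y : L) : assoc x x y = 1 := by
  rw [INVA h2 hM]; exact E1 h2 hM _ _

lemma E3a (u c : L) : assoc u c⁻¹ c = 1 := by
  have h := M1mul h2 hM c (u * c⁻¹) c⁻¹
  rw [mul_left_inv, A_one3, rinv', one_mul'] at h
  exact h

lemma E3b (u c : L) : assoc u c c⁻¹ = 1 := by
  have h := E3a h2 hM u c⁻¹
  rwa [inv_inv'] at h

lemma E3c (c u : L) : assoc c⁻¹ c u = 1 := by
  have h := M1mul h2 hM c c⁻¹ (u * c⁻¹)
  rw [rinv', mul_left_inv, A_one1, mul_one'] at h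
  exact h

lemma E3d (c u : L) : assoc c c⁻¹ u = 1 := by
  have h := E3c h2 hM c⁻¹ u
  rwa [inv_inv'] at h

/-- The pentagon / cocycle identity. -/
lemma starA (x y z w : L) :
    assoc x y (z*w) * assoc (x*y) z w = (assoc y z w * assoc x (y*z) w) * assoc x y z := by
  have e1 : ((x*y)*z)*w = ((x*(y*(z*w)) * assoc y z w) * assoc x (y*z) w) * assoc x y z := by
    rw [assoc_eq x y z, cen_swap (hA h2 x y z) (x*(y*z)) w, assoc_eq x (y*z) w,
      assoc_eq y z w, ← cen_a3 (hA h2 y z w) x (y*(z*w))]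
  have e2 : ((x*y)*z)*w = (x*(y*(z*w)) * assoc x y (z*w)) * assoc (x*y) z w := by
    rw [assoc_eq (x*y) z w, assoc_eq x y (z*w)]
  rw [e1] at e2
  rw [cen_a2 (hA h2 y z w) (x*(y*(z*w))) (assoc x (y*z) w),
    cen_a2 (cen_mul (hA h2 y z w) (hA h2 x (y*z) w)) (x*(y*(z*w))) (assoc x y z),
    cen_a2 (hA h2 x y (z*w)) (x*(y*(z*w))) (assoc (x*y) z w)] at e2
  exact (left_cancel e2).symm

lemma M4 (d c e : L) : assoc d (c*e) c = (assoc d c e)⁻¹ := by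
  have h := starA h2 hM d c e c
  rw [M1mul h2 hM, flex h2 hM, one_mul'] at h
  exact inv_eq_of_mul_eq_one h.symm

lemma M5 (d c u : L) : assoc d c (c⁻¹*u) = (assoc d u c)⁻¹ := by
  have h := M4 h2 hM d c (c⁻¹*u)
  rw [linv'] at h
  rw [h, inv_inv']

lemma M6 (a b f : L) : assoc a (b*a) f = (assoc b a f)⁻¹ := by
  have h := M4 h2 hM f⁻¹ a⁻¹ b⁻¹
  rw [← mul_inv_rev b a] at h
  rw [INVA h2 hM a (b*a) f, INVA h2 hM b a f]
  exact h

lemma M7 (a u f : L) : assoc (u*a⁻¹) a f = (assoc a u f)⁻¹ := by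
  have h := M6 h2 hM a (u*a⁻¹) f
  rw [rinv'] at h
  rw [h, inv_inv']

lemma M3 (a b f : L) : assoc a b (a*f) = (assoc (a*b) a f)⁻¹ := by
  have h := M1 h2 hM a⁻¹ f⁻¹ b⁻¹
  rw [← mul_inv_rev a b, ← mul_inv_rev a f] at h
  rw [INVA h2 hM a b (a*f), INVA h2 hM (a*b) a f, h, inv_inv']

lemma Xst (y z w : L) : assoc y⁻¹ (y*z) w = (assoc y z w)⁻¹ := by
  have h := starA h2 hM y⁻¹ y z w
  rw [E3c h2 hM y (z*w), E3c h2 hM y z, mul_left_inv, A_one1, one_mul', mul_one'] at h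
  exact eq_inv_of_mul_eq_one h.symm

end Mouf

lemma cen_tail {p : L} (hp : inCenter p) (U V : L) : (U*p)⁻¹ * (V*p) = U⁻¹ * V := by
  rw [mul_inv_rev, cen_a1 (cen_inv hp), ← cen_a3 hp, cen_comm (cen_inv hp), rinv]

lemma Lc1 {p : L} (hp : inCenter p) (x y z : L) : assoc (x*p) y z = assoc x y z := by
  show ((x*p)*(y*z))⁻¹ * (((x*p)*y)*z) = assoc x y z
  rw [cen_swap hp x (y*z), cen_swap hp x y, cen_swap hp (x*y) z]
  exact cen_tail hp _ _

lemma Lc2 {p : L} (hp : inCenter p) (x y z : L) : assoc x (y*p) z = assoc x y z := by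
  show (x*((y*p)*z))⁻¹ * ((x*(y*p))*z) = assoc x y z
  rw [cen_swap hp y z, ← cen_a3 hp x (y*z), ← cen_a3 hp x y, cen_swap hp (x*y) z]
  exact cen_tail hp _ _

lemma Lc3 {p : L} (hp : inCenter p) (x y z : L) : assoc x y (z*p) = assoc x y z := by
  show (x*(y*(z*p)))⁻¹ * ((x*y)*(z*p)) = assoc x y z
  rw [← cen_a3 hp y z, ← cen_a3 hp x (y*z), ← cen_a3 hp (x*y) z]
  exact cen_tail hp _ _

/-- congruence modulo the centre -/
def ModC (x y : L) : Prop := ∃ p, inCenter p ∧ x = y * p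

lemma mc_of_eq {x y : L} (h : x = y) : ModC x y := ⟨1, cen_one, by rw [h, mul_one']⟩
lemma mc_refl (x : L) : ModC x x := mc_of_eq rfl
lemma mc_symm {x y : L} : ModC x y → ModC y x := by
  rintro ⟨p, hp, rfl⟩
  exact ⟨p⁻¹, cen_inv hp, (rinv _ _).symm⟩
lemma mc_trans {x y z : L} : ModC x y → ModC y z → ModC x z := by
  rintro ⟨p, hp, rfl⟩ ⟨q, hq, rfl⟩
  exact ⟨q*p, cen_mul hq hp, cen_a2 hq _ _⟩
lemma mc_mul {x x' y y' : L} : ModC x x' → ModC y y' → ModC (x*y) (x'*y') := by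
  rintro ⟨p, hp, rfl⟩ ⟨q, hq, rfl⟩
  refine ⟨p*q, cen_mul hp hq, ?_⟩
  rw [← cen_a3 hq, cen_swap hp, cen_a2 hp]
lemma mc_inv {x y : L} : ModC x y → ModC x⁻¹ y⁻¹ := by
  rintro ⟨p, hp, rfl⟩
  exact ⟨p⁻¹, cen_inv hp, by rw [mul_inv_rev, cen_comm (cen_inv hp)]⟩
lemma mc_comm (h2 : ClassTwo L) (x y : L) : ModC (x*y) (y*x) := ⟨comm x y, hC h2 x y, comm_eq x y⟩
lemma mc_assoc (h2 : ClassTwo L) (x y z : L) : ModC ((x*y)*z) (x*(y*z)) :=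
  ⟨assoc x y z, hA h2 x y z, assoc_eq x y z⟩

lemma A_congr {x x' y y' z z' : L} (hx : ModC x x') (hy : ModC y y') (hz : ModC z z') :
    assoc x y z = assoc x' y' z' := by
  obtain ⟨p, hp, rfl⟩ := hx
  obtain ⟨q, hq, rfl⟩ := hy
  obtain ⟨r, hr, rfl⟩ := hz
  rw [Lc1 hp, Lc2 hq, Lc3 hr]

end IPLoop

namespace IPLoop

variable {L : Type*} [IPLoop L]

section Swaps
variable (h2 : ClassTwo L) (hM : IsMoufang L)
include h2 hM
set_option linter.unusedSectionVars false

lemma swap23 (x y z : L) : assoc x z y = (assoc x y z)⁻¹ := by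
  -- step 1
  have s1 : assoc x y z = (assoc (x*y) x (x⁻¹*z))⁻¹ := by
    have h := M3 h2 hM x y (x⁻¹*z)
    rwa [linv'] at h
  -- step 2
  have mc1 : ModC (x*(x*y)⁻¹) y⁻¹ := by
    rw [mul_inv_rev x y]
    refine mc_trans (mc_symm (mc_assoc h2 x y⁻¹ x⁻¹)) ?_
    refine mc_trans (mc_mul (mc_comm h2 x y⁻¹) (mc_refl x⁻¹)) ?_
    refine mc_trans (mc_assoc h2 y⁻¹ x x⁻¹) (mc_of_eq ?_)
    rw [mul_right_inv, mul_one']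
  have s2 : assoc (x*y) x (x⁻¹*z) = (assoc y⁻¹ (x*y) (x⁻¹*z))⁻¹ := by
    have h := M6 h2 hM (x*y) (x*(x*y)⁻¹) (x⁻¹*z)
    rw [rinv'] at h
    rw [h, A_congr mc1 (mc_refl _) (mc_refl _)]
  -- step 3
  have mc2 : ModC ((x*y)*(x⁻¹*z)) (y*z) := by
    refine mc_trans (mc_assoc h2 x y (x⁻¹*z)) ?_
    refine mc_trans (mc_mul (mc_refl x) (mc_symm (mc_assoc h2 y x⁻¹ z))) ?_
    refine mc_trans (mc_mul (mc_refl x) (mc_mul (mc_comm h2 y x⁻¹) (mc_refl z))) ?_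
    refine mc_trans (mc_mul (mc_refl x) (mc_assoc h2 x⁻¹ y z)) (mc_of_eq (linv' _ _))
  have s3 : assoc y⁻¹ (x*y) (x⁻¹*z) = (assoc y⁻¹ (y*z) (x*y))⁻¹ := by
    have h := M4 h2 hM y⁻¹ (x*y) (x⁻¹*z)
    have h2' := congrArg (·⁻¹) h
    simp only [inv_inv'] at h2'
    rw [← h2', A_congr (mc_refl y⁻¹) mc2 (mc_refl _)]
  -- step 4
  have mc3 : ModC ((x*y)*(y*z)⁻¹) (x*z⁻¹) := by
    rw [mul_inv_rev y z]
    refine mc_trans (mc_symm (mc_assoc h2 (x*y) z⁻¹ y⁻¹)) ?_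
    refine mc_trans (mc_mul (mc_assoc h2 x y z⁻¹) (mc_refl y⁻¹)) ?_
    refine mc_trans (mc_mul (mc_mul (mc_refl x) (mc_comm h2 y z⁻¹)) (mc_refl y⁻¹)) ?_
    refine mc_trans (mc_mul (mc_symm (mc_assoc h2 x z⁻¹ y)) (mc_refl y⁻¹)) ?_
    refine mc_trans (mc_assoc h2 (x*z⁻¹) y y⁻¹) (mc_of_eq ?_)
    rw [mul_right_inv, mul_one']
  have s4 : assoc y⁻¹ (y*z) (x*y) = (assoc z (x*z⁻¹) (y*z))⁻¹ := by
    have h := M1 h2 hM (y*z) y⁻¹ ((x*y)*(y*z)⁻¹)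
    rw [rinv', linv] at h
    rw [h, A_congr (mc_refl z) mc3 (mc_refl _)]
  -- step 5
  have mc4 : ModC (z*(x*z⁻¹)) x := by
    refine mc_trans (mc_symm (mc_assoc h2 z x z⁻¹)) ?_
    refine mc_trans (mc_mul (mc_comm h2 z x) (mc_refl z⁻¹)) (mc_of_eq (rinv _ _))
  have mc5 : ModC (z⁻¹*(y*z)) y := by
    refine mc_trans (mc_mul (mc_refl z⁻¹) (mc_comm h2 y z)) (mc_of_eq (linv _ _))
  have s5 : assoc z (x*z⁻¹) (y*z) = (assoc x z y)⁻¹ := by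
    have h := M3 h2 hM z (x*z⁻¹) (z⁻¹*(y*z))
    rw [linv'] at h
    rw [h, A_congr mc4 (mc_refl z) mc5]
  have total : assoc x y z = (assoc x z y)⁻¹ := by
    rw [s1, s2, s3, s4, s5, inv_inv', inv_inv']
  rw [total, inv_inv']

lemma swap12 (x y z : L) : assoc y x z = (assoc x y z)⁻¹ := by
  have s1 : assoc x y z = (assoc (x*y) (z*y⁻¹) y)⁻¹ := by
    have h := M1 h2 hM y x (z*y⁻¹)
    rwa [rinv'] at h
  have mc1 : ModC ((x*y)*(z*y⁻¹)) (x*z) := by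
    refine mc_trans (mc_assoc h2 x y (z*y⁻¹)) ?_
    refine mc_trans (mc_mul (mc_refl x) (mc_mul (mc_refl y) (mc_comm h2 z y⁻¹))) ?_
    exact mc_mul (mc_refl x) (mc_of_eq (linv' _ _))
  have mc2 : ModC ((x*y)⁻¹*y) x⁻¹ := by
    rw [mul_inv_rev x y]
    refine mc_trans (mc_assoc h2 y⁻¹ x⁻¹ y) ?_
    refine mc_trans (mc_mul (mc_refl y⁻¹) (mc_comm h2 x⁻¹ y)) (mc_of_eq (linv _ _))
  have s2 : assoc (x*y) (z*y⁻¹) y = (assoc (x*z) (x*y) x⁻¹)⁻¹ := by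
    have h := M3 h2 hM (x*y) (z*y⁻¹) ((x*y)⁻¹*y)
    rw [linv'] at h
    rw [h, A_congr mc1 (mc_refl _) mc2]
  have mc3 : ModC ((x*y)*(x*z)⁻¹) (y*z⁻¹) := by
    rw [mul_inv_rev x z]
    refine mc_trans (mc_symm (mc_assoc h2 (x*y) z⁻¹ x⁻¹)) ?_
    refine mc_trans (mc_mul (mc_assoc h2 x y z⁻¹) (mc_refl x⁻¹)) ?_
    refine mc_trans (mc_mul (mc_comm h2 x (y*z⁻¹)) (mc_refl x⁻¹)) ?_
    exact mc_trans (mc_assoc h2 (y*z⁻¹) x x⁻¹) (mc_of_eq (by rw [mul_right_inv, mul_one']))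
  have s3 : assoc (x*z) (x*y) x⁻¹ = (assoc (y*z⁻¹) (x*z) x⁻¹)⁻¹ := by
    have h := M6 h2 hM (x*z) ((x*y)*(x*z)⁻¹) x⁻¹
    rw [rinv'] at h
    rw [h, A_congr mc3 (mc_refl _) (mc_refl _)]
  have mc4 : ModC ((x*z)*x⁻¹) z := by
    refine mc_trans (mc_mul (mc_comm h2 x z) (mc_refl x⁻¹)) (mc_of_eq (rinv _ _))
  have s4 : assoc (y*z⁻¹) (x*z) x⁻¹ = (assoc (y*z⁻¹) z (x*z))⁻¹ := by
    have h := M4 h2 hM (y*z⁻¹) (x*z) x⁻¹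
    have h' := congrArg (·⁻¹) h
    simp only [inv_inv'] at h'
    rw [← h', A_congr (mc_refl _) mc4 (mc_refl _)]
  have s5 : assoc (y*z⁻¹) z (x*z) = (assoc y x z)⁻¹ := by
    have h := M1 h2 hM z (y*z⁻¹) ((x*z)*z⁻¹)
    rw [rinv', rinv'] at h
    rw [rinv] at h
    exact h
  have total : assoc x y z = (assoc y x z)⁻¹ := by
    rw [s1, s2, s3, s4, s5, inv_inv', inv_inv']
  rw [total, inv_inv']

lemma swap13 (x y z : L) : assoc z y x = (assoc x y z)⁻¹ := by
  rw [swap12 h2 hM, swap23 h2 hM, swap12 h2 hM, inv_inv']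

lemma Ineg1 (x u w : L) : assoc x⁻¹ u w = (assoc x u w)⁻¹ := by
  have h := Xst h2 hM x (x⁻¹*u) w
  rw [linv'] at h
  rw [h, A_congr (mc_refl x) (mc_comm h2 x⁻¹ u) (mc_refl w), swap12 h2 hM (u*x⁻¹) x w,
    M7 h2 hM x u w, inv_inv']

lemma Ineg2 (x u w : L) : assoc x u⁻¹ w = (assoc x u w)⁻¹ := by
  rw [swap12 h2 hM u⁻¹ x w, Ineg1 h2 hM, inv_inv', swap12 h2 hM]

lemma Ineg3 (x u w : L) : assoc x u w⁻¹ = (assoc x u w)⁻¹ := by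
  rw [swap23 h2 hM x w⁻¹ u, Ineg2 h2 hM, inv_inv', swap23 h2 hM]

end Swaps
end IPLoop

namespace IPLoop

variable {L : Type*} [IPLoop L]

/-- The centre, as an additive commutative group. -/
def Cen (L : Type*) [IPLoop L] : Type _ := {z : L // inCenter z}

instance : Add (Cen L) := ⟨fun a b => ⟨a.1 * b.1, cen_mul a.2 b.2⟩⟩
instance : Zero (Cen L) := ⟨⟨1, cen_one⟩⟩
instance : Neg (Cen L) := ⟨fun a => ⟨a.1⁻¹, cen_inv a.2⟩⟩

instance : AddCommGroup (Cen L) where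
  add := (· + ·)
  zero := 0
  neg := (- ·)
  add_assoc a b c := Subtype.ext (cen_a1 a.2 _ _)
  zero_add a := Subtype.ext (one_mul' a.1)
  add_zero a := Subtype.ext (mul_one' a.1)
  add_comm a b := Subtype.ext (cen_comm a.2 b.1)
  neg_add_cancel a := Subtype.ext (mul_left_inv a.1)
  nsmul := nsmulRec
  zsmul := zsmulRec

@[simp] lemma Cen_add_val (a b : Cen L) : (a+b).1 = a.1*b.1 := rfl
@[simp] lemma Cen_neg_val (a : Cen L) : (-a).1 = a.1⁻¹ := rfl
@[simp] lemma Cen_zero_val : ((0 : Cen L)).1 = 1 := rfl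

/-- The associator as an element of the centre. -/
def AA (h2 : ClassTwo L) (x y z : L) : Cen L := ⟨assoc x y z, hA h2 x y z⟩

@[simp] lemma AA_val (h2 : ClassTwo L) (x y z : L) : (AA h2 x y z).1 = assoc x y z := rfl

/-- the bilinearity defect -/
def Gd (h2 : ClassTwo L) (a b c d : L) : Cen L := AA h2 (a*b) c d - AA h2 a c d - AA h2 b c d

lemma Gd_def (h2 : ClassTwo L) (a b c d : L) :
    Gd h2 a b c d = AA h2 (a*b) c d - AA h2 a c d - AA h2 b c d := rfl

section CenLemmas
variable (h2 : ClassTwo L) (hM : IsMoufang L)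
include h2 hM
set_option linter.unusedSectionVars false

lemma starC (x y z w : L) :
    AA h2 x y (z*w) + AA h2 (x*y) z w = (AA h2 y z w + AA h2 x (y*z) w) + AA h2 x y z :=
  Subtype.ext (starA h2 hM x y z w)

lemma swap12C (x y z : L) : AA h2 y x z = -AA h2 x y z := Subtype.ext (swap12 h2 hM x y z)
lemma swap23C (x y z : L) : AA h2 x z y = -AA h2 x y z := Subtype.ext (swap23 h2 hM x y z)
lemma swap13C (x y z : L) : AA h2 z y x = -AA h2 x y z := Subtype.ext (swap13 h2 hM x y z)
lemma Ineg1C (x u w : L) : AA h2 x⁻¹ u w = -AA h2 x u w := Subtype.ext (Ineg1 h2 hM x u w)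

lemma AAcomm1 (x y z w : L) : AA h2 (x*y) z w = AA h2 (y*x) z w :=
  Subtype.ext (A_congr (mc_comm h2 x y) (mc_refl z) (mc_refl w))

lemma h3C (h3 : ∀ x y z : L, assoc x y z ^ (3:ℕ) = 1) (x y z : L) :
    (AA h2 x y z + AA h2 x y z) + AA h2 x y z = 0 := by
  refine Subtype.ext ?_
  have h := h3 x y z
  have hu : assoc x y z ^ (3:ℕ) = assoc x y z * (assoc x y z * (assoc x y z * 1)) := rfl
  rw [hu, mul_one'] at h
  show (assoc x y z * assoc x y z) * assoc x y z = 1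
  rw [cen_a1 (hA h2 x y z)]
  exact h


lemma Gsym (a b c d : L) : Gd h2 a b c d = Gd h2 b a c d := by
  rw [Gd_def, Gd_def, AAcomm1 h2 hM a b]
  abel

lemma Ganti (a b c d : L) : Gd h2 a b c d = -Gd h2 a b d c := by
  rw [Gd_def, Gd_def, swap23C h2 hM (a*b) d c, swap23C h2 hM a d c, swap23C h2 hM b d c]
  abel

lemma RC (x y z w : L) : Gd h2 x y z w + Gd h2 y z x w + Gd h2 z w x y = 0 := by
  have st := starC h2 hM x y z w
  have st' : AA h2 x y (z*w) = (AA h2 y z w + AA h2 x (y*z) w) + AA h2 x y z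
      - AA h2 (x*y) z w := eq_sub_of_add_eq st
  rw [Gd_def, Gd_def, Gd_def,
    swap12C h2 hM x (y*z) w,   -- AA (y*z) x w = -AA x (y*z) w
    swap12C h2 hM x y w,       -- AA y x w = -AA x y w
    swap12C h2 hM x z w,       -- AA z x w = -AA x z w
    swap13C h2 hM y x (z*w),   -- AA (z*w) x y = -AA y x (z*w)
    swap12C h2 hM x y (z*w),   -- AA y x (z*w) = -AA x y (z*w)
    swap12C h2 hM x z y,       -- AA z x y = -AA x z y
    swap23C h2 hM x y z,       -- AA x z y = -AA x y z
    swap12C h2 hM x w y,       -- AA w x y = -AA x w y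
    swap23C h2 hM x y w,       -- AA x w y = -AA x y w
    st']
  abel

lemma SC (x y z w : L) : Gd h2 x w y z = -Gd h2 z w x y := by
  have r1 := RC h2 hM x y z w
  have r2 := RC h2 hM z y x w
  rw [Gsym h2 hM z y x w, Gsym h2 hM y x z w, Ganti h2 hM x w z y] at r2
  have hD : Gd h2 y z x w + Gd h2 x y z w = Gd h2 x w y z := add_neg_eq_zero.mp r2
  have hC : Gd h2 z w x y = -(Gd h2 x y z w + Gd h2 y z x w) :=
    eq_neg_of_add_eq_zero_right r1
  rw [← hD, hC]
  abel

lemma Gzero (h3 : ∀ x y z : L, assoc x y z ^ (3:ℕ) = 1) (a b c d : L) :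
    Gd h2 a b c d = 0 := by
  have s1 := SC h2 hM a c d b
  have s2 := SC h2 hM d a c b
  have s3 := SC h2 hM c d a b
  -- s1 : Gd a b c d = -Gd d b a c ; s2 : Gd d b a c = -Gd c b d a ; s3 : Gd c b d a = -Gd a b c d
  have hGG : Gd h2 a b c d = -Gd h2 a b c d := by
    calc Gd h2 a b c d = -Gd h2 d b a c := s1
    _ = -(-Gd h2 c b d a) := by rw [s2]
    _ = -(-(-Gd h2 a b c d)) := by rw [s3]
    _ = -Gd h2 a b c d := by abel
  have h2G : Gd h2 a b c d + Gd h2 a b c d = 0 := add_eq_zero_iff_eq_neg.mpr hGG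
  have h3G : (Gd h2 a b c d + Gd h2 a b c d) + Gd h2 a b c d = 0 := by
    have k : (Gd h2 a b c d + Gd h2 a b c d) + Gd h2 a b c d =
        ((AA h2 (a*b) c d + AA h2 (a*b) c d) + AA h2 (a*b) c d)
        - ((AA h2 a c d + AA h2 a c d) + AA h2 a c d)
        - ((AA h2 b c d + AA h2 b c d) + AA h2 b c d) := by
      rw [Gd_def]; abel
    rw [h3C h2 hM h3 (a*b) c d, h3C h2 hM h3 a c d, h3C h2 hM h3 b c d] at k
    simpa using k
  rw [h2G] at h3G
  simpa using h3G

lemma P1C (h3 : ∀ x y z : L, assoc x y z ^ (3:ℕ) = 1) (x y z w : L) :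
    AA h2 (x*y) z w = AA h2 x z w + AA h2 y z w := by
  have h := Gzero h2 hM h3 x y z w
  rw [Gd_def, sub_sub, sub_eq_zero] at h
  exact h

lemma L2addC (h3 : ∀ x y z : L, assoc x y z ^ (3:ℕ) = 1) (x y z w : L) :
    AA h2 x (y*z) w = AA h2 x y w + AA h2 x z w := by
  have h : AA h2 x (y*z) w = -AA h2 (y*z) x w := swap12C h2 hM (y*z) x w
  rw [h, P1C h2 hM h3 y z x w, swap12C h2 hM x y w, swap12C h2 hM x z w]
  abel

lemma L3addC (h3 : ∀ x y z : L, assoc x y z ^ (3:ℕ) = 1) (x y z w : L) :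
    AA h2 x y (z*w) = AA h2 x y z + AA h2 x y w := by
  have h : AA h2 x y (z*w) = -AA h2 (z*w) y x := swap13C h2 hM (z*w) y x
  rw [h, P1C h2 hM h3 z w y x, swap13C h2 hM x y z, swap13C h2 hM x y w]
  abel

lemma L3add (h3 : ∀ x y z : L, assoc x y z ^ (3:ℕ) = 1) (x y z w : L) :
    assoc x y (z*w) = assoc x y z * assoc x y w := by
  have h := congrArg Subtype.val (L3addC h2 hM h3 x y z w)
  simpa using h

end CenLemmas
end IPLoop

namespace IPLoop

variable {L : Type*} [IPLoop L]

section Final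
variable (h2 : ClassTwo L) (hM : IsMoufang L)
include h2 hM
set_option linter.unusedSectionVars false

/-- the master formula for the κ-isotope product -/
lemma master (κ c d : L) : (c*κ)*(κ⁻¹*d) = (c*d) * assoc κ⁻¹ c d := by
  have h := assoc_eq (c*κ) κ⁻¹ d
  have h7 : assoc (c*κ) κ⁻¹ d = (assoc κ⁻¹ c d)⁻¹ := by
    have h' := M7 h2 hM κ⁻¹ c d
    rwa [inv_inv'] at h'
  rw [rinv, h7] at h
  have h2' : (c*d) * assoc κ⁻¹ c d
      = (((c*κ)*(κ⁻¹*d)) * (assoc κ⁻¹ c d)⁻¹) * assoc κ⁻¹ c d := by rw [← h]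
  rw [rinv'] at h2'
  exact h2'.symm

lemma powA (h3 : ∀ x y z : L, assoc x y z ^ (3:ℕ) = 1) (u c : L) (n : ℕ) :
    assoc u c (c ^ n) = 1 := by
  induction n with
  | zero =>
      have hz : (c:L)^(0:ℕ) = 1 := rfl
      rw [hz, A_one3]
  | succ n ih =>
      have hp : (c:L)^(n+1) = c * c^n := rfl
      rw [hp, L3add h2 hM h3 u c c (c^n), E1 h2 hM, one_mul', ih]

lemma keyCommL (h3 : ∀ x y z : L, assoc x y z ^ (3:ℕ) = 1) (κ c d : L) :
    (assoc κ⁻¹ d c)⁻¹ * assoc κ⁻¹ c d = (assoc c κ d)⁻¹ := by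
  have key : (-(AA h2 κ⁻¹ d c)) + AA h2 κ⁻¹ c d = -(AA h2 c κ d) := by
    rw [Ineg1C h2 hM κ d c, Ineg1C h2 hM κ c d, swap12C h2 hM d κ c,
      swap13C h2 hM c κ d, swap12C h2 hM c κ d]
    simp only [neg_neg]
    rw [eq_neg_iff_add_eq_zero]
    exact h3C h2 hM h3 c κ d
  have h := congrArg Subtype.val key
  simpa using h

lemma keyAssocL (h3 : ∀ x y z : L, assoc x y z ^ (3:ℕ) = 1) (κ c d e : L) :
    assoc κ⁻¹ c d * assoc κ⁻¹ (c*d) e = assoc κ⁻¹ d e * assoc κ⁻¹ c (d*e) := by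
  have key : AA h2 κ⁻¹ c d + AA h2 κ⁻¹ (c*d) e = AA h2 κ⁻¹ d e + AA h2 κ⁻¹ c (d*e) := by
    rw [L2addC h2 hM h3 κ⁻¹ c d e, L3addC h2 hM h3 κ⁻¹ c d e]
    abel
  have h := congrArg Subtype.val key
  simpa using h

end Final
end IPLoop

open IPLoop in
/-- The `n`-th power with respect to the κ-isotope operation
`c ∘ d = (cκ)(κ⁻¹d)`. -/
def circPow {L : Type*} [IPLoop L] (κ c : L) : ℕ → L
  | 0 => 1
  | n + 1 => (c * κ) * (κ⁻¹ * circPow κ c n)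

open IPLoop in
/-- In a Moufang loop of class at most 2 with `[x,y,z]³ = 1`, the κ-isotope
`(L,∘)`, `c ∘ d = (cκ)(κ⁻¹d)`, is a loop with identity 1 whose inverses agree
with those of `L`, in which ∘-powers equal ordinary powers, the ∘-commutator
is `[c,d]·[c,κ,d]⁻¹`, and the ∘-associator is `[c,d,e]`. -/
theorem stmt19 {L : Type*} [IPLoop L] (hM : IsMoufang L) (h2 : ClassTwo L)
    (h3 : ∀ x y z : L, assoc x y z ^ (3 : ℕ) = 1) (κ : L) :
    (∀ c : L, Function.Bijective fun d : L => (c * κ) * (κ⁻¹ * d)) ∧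
    (∀ d : L, Function.Bijective fun c : L => (c * κ) * (κ⁻¹ * d)) ∧
    (∀ d : L, (1 * κ) * (κ⁻¹ * d) = d) ∧
    (∀ c : L, (c * κ) * (κ⁻¹ * 1) = c) ∧
    (∀ c : L, (c * κ) * (κ⁻¹ * c⁻¹) = 1 ∧ (c⁻¹ * κ) * (κ⁻¹ * c) = 1) ∧
    (∀ (c : L) (n : ℕ), circPow κ c n = c ^ n) ∧
    (∀ c d : L,
      ((d * κ) * (κ⁻¹ * c))⁻¹ * ((c * κ) * (κ⁻¹ * d))
        = comm c d * (assoc c κ d)⁻¹) ∧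
    (∀ c d e : L,
      ((c * κ) * (κ⁻¹ * ((d * κ) * (κ⁻¹ * e))))⁻¹ *
          ((((c * κ) * (κ⁻¹ * d)) * κ) * (κ⁻¹ * e))
        = assoc c d e) := by
  refine ⟨?_, ?_, ?_, ?_, ?_, ?_, ?_, ?_⟩
  · -- left translations bijective
    intro c
    refine Function.bijective_iff_has_inverse.mpr ⟨fun y => κ * ((c*κ)⁻¹ * y), ?_, ?_⟩
    · intro d
      simp only []
      rw [linv, linv']
    · intro y
      simp only []
      rw [linv, linv']
  · -- right translations bijective
    intro d
    refine Function.bijective_iff_has_inverse.mpr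
      ⟨fun y => (y * (κ⁻¹*d)⁻¹) * κ⁻¹, ?_, ?_⟩
    · intro c
      simp only []
      rw [rinv, rinv]
    · intro y
      simp only []
      rw [rinv', rinv']
  · intro d
    rw [one_mul', linv']
  · intro c
    rw [mul_one', rinv]
  · intro c
    constructor
    · rw [master h2 hM κ c c⁻¹, E3b h2 hM κ⁻¹ c, mul_one', IPLoop.mul_right_inv]
    · rw [master h2 hM κ c⁻¹ c, E3a h2 hM κ⁻¹ c, mul_one', IPLoop.mul_left_inv]
  · intro c n
    induction n with
    | zero => rfl
    | succ n ih =>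
        show (c * κ) * (κ⁻¹ * circPow κ c n) = c ^ (n+1)
        rw [ih, master h2 hM κ c (c^n), powA h2 hM h3 κ⁻¹ c n, mul_one']
        rfl
  · intro c d
    rw [master h2 hM κ d c, master h2 hM κ c d, IPLoop.mul_inv_rev,
      cen_a1 (cen_inv (hA h2 κ⁻¹ d c)), ← cen_a3 (hA h2 κ⁻¹ c d) (d*c)⁻¹ (c*d),
      cen_left_swap (cen_inv (hA h2 κ⁻¹ d c)) ((d*c)⁻¹*(c*d)) (assoc κ⁻¹ c d),
      keyCommL h2 hM h3 κ c d]
    rfl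
  · intro c d e
    rw [master h2 hM κ d e, master h2 hM κ c ((d*e) * assoc κ⁻¹ d e),
      Lc3 (hA h2 κ⁻¹ d e) κ⁻¹ c (d*e),
      ← cen_a3 (hA h2 κ⁻¹ d e) c (d*e),
      master h2 hM κ c d,
      master h2 hM κ ((c*d) * assoc κ⁻¹ c d) e,
      Lc2 (hA h2 κ⁻¹ c d) κ⁻¹ (c*d) e,
      cen_swap (hA h2 κ⁻¹ c d) (c*d) e,
      cen_a2 (hA h2 κ⁻¹ d e) (c*(d*e)) (assoc κ⁻¹ c (d*e)),
      cen_a2 (hA h2 κ⁻¹ c d) ((c*d)*e) (assoc κ⁻¹ (c*d) e),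
      ← keyAssocL h2 hM h3 κ c d e,
      cen_tail (cen_mul (hA h2 κ⁻¹ c d) (hA h2 κ⁻¹ (c*d) e))]
    rfl
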